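/- arXiv:0704.1526 — 2 statements merged into one kernel-verified Lean document; each statement's English description precedes it below -/
import Mathlib

section
/- For a prime p and integers r ≥ 1, a ≥ b ≥ 0, the binomial coefficient C(p^r·a, p^r·b) is congruent to C(p^(r-1)·a, p^(r-1)·b) modulo p^(2r). -/
/-!
Let `U` be the product of the integers `i` in `(0, p^r b]` prime to `p`. Stripping the multiples
of `p` from the factorials gives `C(p^r a, p^r b) · U = C(p^(r-1) a, p^(r-1) b) · ∏ (x + i)` with
`x = p^r (a - b)`, and modulo `x²` the product is `U + x e`, where `e` is the sum of the products
of all factors but one. Pairing `i` with `p^r b - i` shows `p^r ∣ e`; the pairing has a fixed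
point only for `p = 2`, `r = 1` and `b` odd, and then `C(a, b) (a - b)` is even by Lucas' theorem.
So the correction is divisible by `p^(2r)`, and `U` is a unit modulo `p^(2r)`.
-/

open Finset Nat

theorem Finset.prod_Ioc_id_eq_factorial (n : ℕ) : ∏ i ∈ Ioc 0 n, i = n ! := by
  rw [← Ico_add_one_add_one_eq_Ioc, zero_add, prod_Ico_id_eq_factorial]

theorem Finset.exists_prod_add_eq_prod_add_mul_sum_prod_erase {ι R : Type*} [CommSemiring R]
    [DecidableEq ι] (s : Finset ι) (x : R) (f : ι → R) :
    ∃ y, ∏ i ∈ s, (x + f i) = ∏ i ∈ s, f i + x * ∑ i ∈ s, ∏ j ∈ s.erase i, f j + x ^ 2 * y := by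
  induction s using Finset.induction_on with
  | empty => exact ⟨0, by simp⟩
  | insert a s ha ih =>
    obtain ⟨y, hy⟩ := ih
    have hsum : ∑ i ∈ insert a s, ∏ j ∈ (insert a s).erase i, f j =
        ∏ j ∈ s, f j + f a * ∑ i ∈ s, ∏ j ∈ s.erase i, f j := by
      rw [sum_insert ha, erase_insert ha, mul_sum]
      refine congrArg _ (sum_congr rfl fun i hi => ?_)
      rw [erase_insert_of_ne (ne_of_mem_of_not_mem hi ha).symm,
        prod_insert fun h => ha (mem_of_mem_erase h)]
    refine ⟨∑ i ∈ s, ∏ j ∈ s.erase i, f j + (x + f a) * y, ?_⟩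
    rw [prod_insert ha, prod_insert ha, hsum, hy]
    ring

theorem Finset.sum_prod_erase_eq_zero_of_involution {ι R : Type*} [CommRing R] [DecidableEq ι]
    {s : Finset ι} {f : ι → R} (g : ι → ι) (hg_mem : ∀ i ∈ s, g i ∈ s)
    (hg_invol : ∀ i ∈ s, g (g i) = i) (hg_ne : ∀ i ∈ s, g i ≠ i) (hunit : ∀ i ∈ s, IsUnit (f i))
    (hf : ∀ i ∈ s, f i + f (g i) = 0) :
    ∑ i ∈ s, ∏ j ∈ s.erase i, f j = 0 := by
  refine sum_involution (fun i _ => g i) (fun i hi => ?_) (fun i hi _ => hg_ne i hi) hg_mem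
    hg_invol
  refine (hunit i hi).mul_left_cancel ?_
  -- both `f i * ∏ (s.erase i)` and `f (g i) * ∏ (s.erase (g i))` equal `∏ s`, and `f i = -f (g i)`
  linear_combination mul_prod_erase s f hi - mul_prod_erase s f (hg_mem i hi) +
    (∏ j ∈ s.erase (g i), f j) * hf i hi

lemma two_dvd_add_choose_of_odd {b c : ℕ} (hb : Odd b) (hc : Odd c) : 2 ∣ (c + b).choose b := by
  have hlucas := Choose.choose_modEq_choose_mod_mul_choose_div_nat (p := 2) (n := c + b) (k := b)
  rw [Nat.odd_iff] at hb hc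
  rw [show (c + b) % 2 = 0 by omega, hb, choose_zero_succ, zero_mul] at hlucas
  exact Nat.modEq_zero_iff_dvd.1 hlucas

section

variable {p : ℕ}

lemma Nat.Prime.eq_two_of_two_mul_eq_pow_succ_mul (hp : p.Prime) {r b i : ℕ} (hi : ¬ p ∣ i)
    (h : 2 * i = p ^ (r + 1) * b) : p = 2 ∧ r = 0 ∧ i = b := by
  have hp2 : p = 2 := (Nat.prime_dvd_prime_iff_eq hp Nat.prime_two).1 <|
    (hp.dvd_mul.1 (h ▸ dvd_mul_of_dvd_left (dvd_pow_self p r.succ_ne_zero) b)).resolve_right hi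
  subst hp2
  rw [pow_succ', mul_assoc] at h
  have hi' := Nat.eq_of_mul_eq_mul_left two_pos h
  obtain rfl | hr := eq_or_ne r 0
  · simpa using hi'
  · exact absurd (hi' ▸ dvd_mul_of_dvd_left (dvd_pow_self 2 hr) b) hi

def nonMultiples (p N : ℕ) : Finset ℕ := {i ∈ Ioc 0 N | ¬ p ∣ i}

lemma mem_nonMultiples {N i : ℕ} : i ∈ nonMultiples p N ↔ (0 < i ∧ i ≤ N) ∧ ¬ p ∣ i := by
  rw [nonMultiples, mem_filter, mem_Ioc]

lemma coprime_prod_nonMultiples (hp : p.Prime) (N k : ℕ) :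
    Coprime (∏ i ∈ nonMultiples p N, i) (p ^ k) :=
  Coprime.pow_right _ <| Coprime.prod_left fun _ hi =>
    (hp.coprime_iff_not_dvd.2 (mem_nonMultiples.1 hi).2).symm

lemma prod_nonMultiples_add {M : ℕ} (hM : p ∣ M) (N : ℕ) :
    ∏ i ∈ nonMultiples p (M + N), i =
      (∏ i ∈ nonMultiples p M, i) * ∏ i ∈ nonMultiples p N, (M + i) := by
  have hshift : Ioc M (M + N) = (Ioc 0 N).map (addLeftEmbedding M) := by
    rw [map_add_left_Ioc, add_zero]
  rw [nonMultiples, ← Ioc_union_Ioc_eq_Ioc (Nat.zero_le M) (Nat.le_add_right M N), filter_union,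
    prod_union (disjoint_filter_filter (Ioc_disjoint_Ioc_of_le le_rfl)), hshift, filter_map,
    prod_map]
  simp_rw [Function.comp_def, addLeftEmbedding_apply, Nat.dvd_add_right hM]
  rfl

lemma prod_Ioc_filter_dvd_eq_pow_mul_factorial (hp : 0 < p) (m : ℕ) :
    ∏ i ∈ Ioc 0 (p * m) with p ∣ i, i = p ^ m * m ! := by
  have hmul : {i ∈ Ioc 0 (p * m) | p ∣ i} = (Ioc 0 m).image (p * ·) := by
    ext i
    simp only [mem_filter, mem_Ioc, mem_image]
    constructor
    · rintro ⟨⟨h0, hle⟩, k, rfl⟩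
      exact ⟨k, ⟨Nat.pos_of_mul_pos_left h0, Nat.le_of_mul_le_mul_left hle hp⟩, rfl⟩
    · rintro ⟨k, ⟨h0, hle⟩, rfl⟩
      exact ⟨⟨Nat.mul_pos hp h0, Nat.mul_le_mul_left p hle⟩, dvd_mul_right p k⟩
  rw [hmul, prod_image fun _ _ _ _ h => Nat.eq_of_mul_eq_mul_left hp h, prod_mul_distrib,
    prod_const, card_Ioc, Nat.sub_zero, prod_Ioc_id_eq_factorial]

lemma factorial_mul_eq_pow_mul_factorial_mul_prod (hp : 0 < p) (m : ℕ) :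
    (p * m)! = p ^ m * m ! * ∏ i ∈ nonMultiples p (p * m), i := by
  rw [← prod_Ioc_id_eq_factorial, ← prod_filter_mul_prod_filter_not (Ioc 0 (p * m)) (p ∣ ·),
    prod_Ioc_filter_dvd_eq_pow_mul_factorial hp, nonMultiples]

lemma choose_mul_prod_nonMultiples (hp : 0 < p) (k m : ℕ) :
    (p * k + p * m).choose (p * m) * ∏ i ∈ nonMultiples p (p * m), i =
      (k + m).choose m * ∏ i ∈ nonMultiples p (p * m), (p * k + i) := by
  have hfactorials := Nat.add_choose_mul_factorial_mul_factorial (p * k) (p * m)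
  simp only [← mul_add, factorial_mul_eq_pow_mul_factorial_mul_prod hp] at hfactorials
  rw [mul_add, prod_nonMultiples_add (dvd_mul_right p k),
    ← Nat.add_choose_mul_factorial_mul_factorial k m, pow_add] at hfactorials
  have hpos : 0 < p ^ k * p ^ m * k ! * m ! * ∏ i ∈ nonMultiples p (p * k), i :=
    Nat.mul_pos (by positivity) (prod_pos fun i hi => (mem_nonMultiples.1 hi).1.1)
  refine Nat.eq_of_mul_eq_mul_right hpos ?_
  convert hfactorials using 1 <;> ring

lemma pow_dvd_sum_prod_erase_nonMultiples (hp : p.Prime) {r N : ℕ} (hN : p ^ r ∣ N)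
    (hfix : ∀ i ∈ nonMultiples p N, 2 * i ≠ N) :
    p ^ r ∣ ∑ i ∈ nonMultiples p N, ∏ j ∈ (nonMultiples p N).erase i, j := by
  obtain rfl | hr := eq_or_ne r 0
  · simp
  have hpN : p ∣ N := (dvd_pow_self p hr).trans hN
  have hreflect : ∀ i ∈ nonMultiples p N, N - i ∈ nonMultiples p N := by
    intro i hi
    obtain ⟨⟨h0, hle⟩, hpi⟩ := mem_nonMultiples.1 hi
    have hne : i ≠ N := fun h => hpi (h ▸ hpN)
    refine mem_nonMultiples.2 ⟨⟨by omega, by omega⟩, fun h => hpi ?_⟩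
    simpa [Nat.sub_sub_self hle] using Nat.dvd_sub hpN h
  rw [← ZMod.natCast_eq_zero_iff, Nat.cast_sum]
  simp_rw [Nat.cast_prod]
  refine sum_prod_erase_eq_zero_of_involution (N - ·) hreflect
    (fun i hi => Nat.sub_sub_self (mem_nonMultiples.1 hi).1.2)
    (fun i hi h => hfix i hi (by omega)) (fun i hi => ?_) (fun i hi => ?_)
  · exact (ZMod.isUnit_iff_coprime i (p ^ r)).2
      ((hp.coprime_iff_not_dvd.2 (mem_nonMultiples.1 hi).2).symm.pow_right r)
  · rw [← Nat.cast_add, Nat.add_sub_cancel' (mem_nonMultiples.1 hi).1.2, ZMod.natCast_eq_zero_iff]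
    exact hN

lemma pow_dvd_choose_mul_sum_prod_erase (hp : p.Prime) (r b c : ℕ) :
    p ^ (r + 1) ∣ (p ^ r * c + p ^ r * b).choose (p ^ r * b) * c *
      ∑ i ∈ nonMultiples p (p ^ (r + 1) * b),
        ∏ j ∈ (nonMultiples p (p ^ (r + 1) * b)).erase i, j := by
  by_cases hfix : ∃ i ∈ nonMultiples p (p ^ (r + 1) * b), 2 * i = p ^ (r + 1) * b
  · obtain ⟨i, hi, hi_half⟩ := hfix
    have hpi := (mem_nonMultiples.1 hi).2
    obtain ⟨rfl, rfl, rfl⟩ := hp.eq_two_of_two_mul_eq_pow_succ_mul hpi hi_half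
    refine dvd_mul_of_dvd_left ?_ _
    simp only [pow_zero, one_mul, zero_add, pow_one]
    rcases Nat.even_or_odd c with hc | hc
    · exact dvd_mul_of_dvd_right hc.two_dvd _
    · exact dvd_mul_of_dvd_left
        (two_dvd_add_choose_of_odd (Nat.odd_iff.2 (Nat.two_dvd_ne_zero.1 hpi)) hc) _
  · exact dvd_mul_of_dvd_right (pow_dvd_sum_prod_erase_nonMultiples hp (dvd_mul_right _ _)
      fun i hi h => hfix ⟨i, hi, h⟩) _

end

/-- For a prime `p` and integers `r ≥ 1`, `a ≥ b ≥ 0`, the binomial coefficient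
`C(p^r·a, p^r·b)` is congruent to `C(p^(r-1)·a, p^(r-1)·b)` modulo `p^(2r)`. -/
theorem binom_congr_mod_p_pow (p r a b : ℕ) (hp : p.Prime) (hr : 1 ≤ r) (hba : b ≤ a) :
    (p ^ r * a).choose (p ^ r * b) ≡ (p ^ (r - 1) * a).choose (p ^ (r - 1) * b)
      [MOD p ^ (2 * r)] := by
  obtain ⟨r, rfl⟩ := Nat.exists_eq_add_of_le' hr
  obtain ⟨c, rfl⟩ := Nat.exists_eq_add_of_le' hba
  rw [Nat.add_sub_cancel, mul_add (p ^ (r + 1)), mul_add (p ^ r)]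
  set T := nonMultiples p (p ^ (r + 1) * b)
  set E := ∑ i ∈ T, ∏ j ∈ T.erase i, j
  set C0 := (p ^ r * c + p ^ r * b).choose (p ^ r * b)
  have hchoose := choose_mul_prod_nonMultiples hp.pos (p ^ r * c) (p ^ r * b)
  rw [← mul_assoc, ← mul_assoc, ← pow_succ'] at hchoose
  obtain ⟨y, hy⟩ := exists_prod_add_eq_prod_add_mul_sum_prod_erase T (p ^ (r + 1) * c) (fun i => i)
  have hdvd : p ^ (2 * (r + 1)) ∣ C0 * (p ^ (r + 1) * c * E + (p ^ (r + 1) * c) ^ 2 * y) := by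
    rw [show C0 * (p ^ (r + 1) * c * E + (p ^ (r + 1) * c) ^ 2 * y) =
      p ^ (r + 1) * (C0 * c * E) + p ^ (2 * (r + 1)) * (C0 * c ^ 2 * y) by ring, two_mul, pow_add]
    exact dvd_add (mul_dvd_mul_left _ (pow_dvd_choose_mul_sum_prod_erase hp r b c))
      (dvd_mul_right _ _)
  refine Nat.ModEq.cancel_right_of_coprime
    (coprime_prod_nonMultiples hp (p ^ (r + 1) * b) _).symm ?_
  calc _ = C0 * ∏ i ∈ T, i + C0 * (p ^ (r + 1) * c * E + (p ^ (r + 1) * c) ^ 2 * y) := by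
        rw [hchoose, hy]; ring
    _ ≡ C0 * ∏ i ∈ T, i + 0 [MOD p ^ (2 * (r + 1))] :=
        Nat.ModEq.add_left _ (Nat.modEq_zero_iff_dvd.2 hdvd)
    _ = _ := add_zero _
end

section
/- Let p be prime, r ≥ 1, and let a₁,...,aₙ be nonnegative integers with sum a. Then the multinomial coefficient (p^r·a)! / ((p^r·a₁)! ⋯ (p^r·aₙ)!) is congruent to (p^(r-1)·a)! / ((p^(r-1)·a₁)! ⋯ (p^(r-1)·aₙ)!) modulo p^(2r). -/
/-!
Write `N = p^(r-1) b` and `D = p^(r-1) c`. Splitting the multiples of `p` off the ascending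
factorial `(pD + 1) ⋯ (pD + pN)` gives `C(pN + pD, pN) · U(0) = C(N + D, N) · U(D)`, where `U(m)`
is the product of the integers in `(pm, p(m + N)]` prime to `p`. Since `(pD)² = (p^r c)²` vanishes
modulo `p^(2r)`, the shift is first order there: `U(D) ≡ U(0) (1 + pD ∑ u⁻¹)`, the sum running over
the `u ≤ p^r b` prime to `p`. Modulo `p^r` this sum is `b σ`, with `σ` the sum of all inverses in
`ℤ/p^r`, and `2σ = 0` because `u ↦ -u` permutes the units. As `b c C(N + D, N)` is even, the
correction term vanishes modulo `p^(2r)`. A multinomial coefficient is a product of such binomials.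
-/

open Finset Nat

@[to_additive sum_range_mul_eq_sum_sum]
theorem Finset.prod_range_mul_eq_prod_prod {M : Type*} [CommMonoid M] (f : ℕ → M) (m n : ℕ) :
    ∏ k ∈ range (m * n), f k = ∏ j ∈ range n, ∏ i ∈ range m, f (m * j + i) := by
  induction n with
  | zero => simp
  | succ n ih => rw [Nat.mul_succ, prod_range_add, ih, prod_range_succ]

theorem ZMod.sum_range_natCast {M : Type*} [AddCommMonoid M] {q : ℕ} [NeZero q]
    (f : ZMod q → M) : ∑ k ∈ range q, f k = ∑ z, f z :=
  sum_nbij' (↑) ZMod.val (by simp) (by simp [ZMod.val_lt])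
    (fun _ hk => ZMod.val_cast_of_lt (mem_range.1 hk)) (fun z _ => ZMod.natCast_zmod_val z)
    (fun _ _ => rfl)

theorem ZMod.sum_range_mul_natCast_add_one {M : Type*} [AddCommMonoid M] {q : ℕ} [NeZero q]
    (f : ZMod q → M) (b : ℕ) :
    ∑ k ∈ range (q * b), f ((k + 1 : ℕ) : ZMod q) = b • ∑ z, f z := by
  have hblock : ∀ j, ∑ i ∈ range q, f ((q * j + i + 1 : ℕ) : ZMod q) = ∑ z, f z := fun j => by
    simp only [Nat.cast_add, Nat.cast_mul, Nat.cast_one, ZMod.natCast_self, zero_mul, zero_add]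
    rw [ZMod.sum_range_natCast (fun z => f (z + 1))]
    exact Equiv.sum_comp (Equiv.addRight 1) f
  rw [sum_range_mul_eq_sum_sum, sum_congr rfl fun j _ => hblock j, sum_const, card_range]

theorem ZMod.natCast_mul_eq_zero_of_castHom_eq_zero {n : ℕ} [NeZero n] {z : ZMod (n ^ 2)}
    (hz : ZMod.castHom (dvd_pow_self n two_ne_zero) (ZMod n) z = 0) :
    (n : ZMod (n ^ 2)) * z = 0 := by
  rw [← ZMod.natCast_zmod_val z, map_natCast, ZMod.natCast_eq_zero_iff] at hz
  rw [← ZMod.natCast_zmod_val z, ← Nat.cast_mul, ZMod.natCast_eq_zero_iff]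
  exact (by rw [sq] : n ^ 2 ∣ n * n).trans (Nat.mul_dvd_mul_left n hz)

theorem Ring.inverse_neg {R : Type*} [Ring R] (x : R) : Ring.inverse (-x) = -Ring.inverse x := by
  by_cases hx : IsUnit x
  · obtain ⟨u, rfl⟩ := hx
    rw [← Units.val_neg, Ring.inverse_unit, Ring.inverse_unit]
    simp
  · rw [Ring.inverse_non_unit _ hx, Ring.inverse_non_unit _ (mt (IsUnit.neg_iff x).1 hx),
      neg_zero]

theorem sum_ringInverse_add_self {R : Type*} [Ring R] [Fintype R] :
    ∑ z : R, Ring.inverse z + ∑ z : R, Ring.inverse z = 0 := by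
  nth_rw 1 [← Equiv.sum_comp (Equiv.neg R)]
  simp [Ring.inverse_neg]

theorem map_ringInverse {R S F : Type*} [MonoidWithZero R] [MonoidWithZero S] [FunLike F R S]
    [MonoidHomClass F R S] (f : F) {x : R} (hx : IsUnit x) :
    f (Ring.inverse x) = Ring.inverse (f x) := by
  obtain ⟨u, rfl⟩ := hx
  simpa using (Ring.inverse_unit (Units.map (f : R →* S) u)).symm

theorem prod_one_add_mul_of_mul_self_eq_zero {ι R : Type*} [CommRing R] {x : R} (hx : x * x = 0)
    (s : Finset ι) (a : ι → R) : ∏ k ∈ s, (1 + x * a k) = 1 + x * ∑ k ∈ s, a k := by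
  classical
  induction s using Finset.induction_on with
  | empty => simp
  | insert i s hi ih =>
    rw [prod_insert hi, sum_insert hi, ih]
    linear_combination a i * (∑ k ∈ s, a k) * hx

theorem prod_add_of_mul_self_eq_zero {ι R : Type*} [CommRing R] {x : R} (hx : x * x = 0)
    (s : Finset ι) {u : ι → R} (hu : ∀ k ∈ s, IsUnit (u k)) :
    ∏ k ∈ s, (x + u k) = (∏ k ∈ s, u k) * (1 + x * ∑ k ∈ s, Ring.inverse (u k)) := by
  rw [← prod_one_add_mul_of_mul_self_eq_zero hx, ← prod_mul_distrib]
  refine prod_congr rfl fun k hk => ?_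
  linear_combination (-x) * Ring.mul_inverse_cancel _ (hu k hk)

/-- The product of the integers in `(p * m, p * (m + n)]` that are not divisible by `p`. -/
def coprimeAscFactorial (p m n : ℕ) : ℕ :=
  ∏ j ∈ range n, ∏ i ∈ range (p - 1), (p * (m + j) + i + 1)

theorem coprimeAscFactorial_eq_prod_product (p m n : ℕ) :
    coprimeAscFactorial p m n
      = ∏ x ∈ range n ×ˢ range (p - 1), (p * m + (p * x.1 + x.2 + 1)) := by
  rw [coprimeAscFactorial, prod_product]
  exact prod_congr rfl fun j _ => prod_congr rfl fun i _ => by ring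

theorem coprime_mul_add_add_one {p i : ℕ} (hp : p.Prime) (hi : i + 1 < p) (j : ℕ) :
    (p * j + i + 1).Coprime p := by
  rw [add_assoc, Nat.coprime_mul_left_add_left]
  exact (Nat.coprime_of_lt_prime i.succ_ne_zero hi hp).symm

theorem coprimeAscFactorial_coprime {p : ℕ} (hp : p.Prime) (m n : ℕ) :
    (coprimeAscFactorial p m n).Coprime p :=
  Nat.Coprime.prod_left fun _ _ => Nat.Coprime.prod_left fun _ hi =>
    coprime_mul_add_add_one hp (by rw [mem_range] at hi; omega) _

theorem ascFactorial_mul_eq {p : ℕ} (hp : 0 < p) (m n : ℕ) :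
    (p * m + 1).ascFactorial (p * n)
      = p ^ n * (m + 1).ascFactorial n * coprimeAscFactorial p m n := by
  have hblock : ∀ j, ∏ i ∈ range p, (p * m + 1 + (p * j + i))
      = p * (m + 1 + j) * ∏ i ∈ range (p - 1), (p * (m + j) + i + 1) := fun j => by
    obtain ⟨k, rfl⟩ : ∃ k, p = k + 1 := ⟨p - 1, by omega⟩
    rw [Nat.add_sub_cancel, prod_range_succ, mul_comm]
    congr 1
    · ring
    · exact prod_congr rfl fun i _ => by ring
  rw [ascFactorial_eq_prod_range, ascFactorial_eq_prod_range, prod_range_mul_eq_prod_prod,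
    prod_congr rfl fun j _ => hblock j, prod_mul_distrib, prod_mul_distrib, prod_const,
    card_range, coprimeAscFactorial]

theorem choose_mul_add_mul_mul_coprimeAscFactorial {p : ℕ} (hp : 0 < p) (m n : ℕ) :
    (p * n + p * m).choose (p * n) * coprimeAscFactorial p 0 n
      = (n + m).choose n * coprimeAscFactorial p m n := by
  have h0 := ascFactorial_mul_eq hp 0 n
  have hm := ascFactorial_mul_eq hp m n
  rw [mul_zero, zero_add, one_ascFactorial, one_ascFactorial] at h0
  rw [ascFactorial_eq_factorial_mul_choose, ascFactorial_eq_factorial_mul_choose, h0,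
    add_comm (p * m), add_comm m] at hm
  apply Nat.eq_of_mul_eq_mul_left (by positivity : 0 < p ^ n * n !)
  linarith

theorem natCast_coprimeAscFactorial_eq {R : Type*} [CommRing R] {p m n : ℕ} (hp : p.Prime)
    (hunit : ∀ ℓ : ℕ, ℓ.Coprime p → IsUnit (ℓ : R))
    (hsq : ((p * m : ℕ) : R) * ((p * m : ℕ) : R) = 0) :
    (coprimeAscFactorial p m n : R) = coprimeAscFactorial p 0 n *
      (1 + (p * m : ℕ) * ∑ x ∈ range n ×ˢ range (p - 1),
        Ring.inverse ((p * x.1 + x.2 + 1 : ℕ) : R)) := by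
  have hu : ∀ x ∈ range n ×ˢ range (p - 1), IsUnit ((p * x.1 + x.2 + 1 : ℕ) : R) :=
    fun x hx => hunit _ <| coprime_mul_add_add_one hp
      (by rw [mem_product, mem_range, mem_range] at hx; omega) _
  rw [coprimeAscFactorial_eq_prod_product, coprimeAscFactorial_eq_prod_product, Nat.cast_prod,
    Nat.cast_prod]
  simp only [mul_zero, zero_add, Nat.cast_add (p * m)]
  exact prod_add_of_mul_self_eq_zero hsq _ hu

theorem two_dvd_mul_mul_choose_mul_add_mul {k : ℕ} (hk : 0 < k) (b c : ℕ) :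
    2 ∣ b * c * (k * b + k * c).choose (k * b) := by
  rcases Nat.even_or_odd b with hb | hb
  · exact (hb.two_dvd.mul_right c).mul_right _
  rcases Nat.even_or_odd c with hc | hc
  · exact (hc.two_dvd.mul_left b).mul_right _
  have hkb : 0 < k * b := Nat.mul_pos hk hb.pos
  have hpascal := Nat.add_one_mul_choose_eq (k * b + k * c - 1) (k * b - 1)
  rw [Nat.sub_add_cancel (by omega), Nat.sub_add_cancel hkb] at hpascal
  have hdvd : 2 ∣ (k * b + k * c).choose (k * b) * b := by
    have hbc : 2 ∣ b + c := (hb.add_odd hc).two_dvd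
    refine (Dvd.dvd.mul_right hbc ((k * b + k * c - 1).choose (k * b - 1))).trans ⟨1, ?_⟩
    apply Nat.eq_of_mul_eq_mul_left hk
    linarith
  exact Dvd.dvd.mul_left (Nat.Coprime.dvd_of_dvd_mul_right (coprime_two_left.2 hb) hdvd) _

theorem sum_ringInverse_natCast_eq_nsmul {p q : ℕ} [NeZero q] (hp : p.Prime) (hpq : p ∣ q)
    {N b : ℕ} (hN : p * N = q * b) :
    ∑ x ∈ range N ×ˢ range (p - 1), Ring.inverse ((p * x.1 + x.2 + 1 : ℕ) : ZMod q)
      = b • ∑ z : ZMod q, Ring.inverse z := by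
  have hlast : ∀ j, ∑ i ∈ range (p - 1), Ring.inverse ((p * j + i + 1 : ℕ) : ZMod q)
      = ∑ i ∈ range p, Ring.inverse ((p * j + i + 1 : ℕ) : ZMod q) := fun j => by
    obtain ⟨k, rfl⟩ : ∃ k, p = k + 1 := ⟨p - 1, by have := hp.pos; omega⟩
    have hnonunit : ¬ IsUnit (((k + 1) * j + k + 1 : ℕ) : ZMod q) := by
      rw [ZMod.isUnit_iff_coprime]
      exact Nat.not_coprime_of_dvd_of_dvd hp.one_lt ⟨j + 1, by ring⟩ hpq
    rw [Nat.add_sub_cancel, sum_range_succ, Ring.inverse_non_unit _ hnonunit, add_zero]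
  rw [sum_product, sum_congr rfl fun j _ => hlast j,
    ← sum_range_mul_eq_sum_sum (fun k => Ring.inverse ((k + 1 : ℕ) : ZMod q)), hN,
    ZMod.sum_range_mul_natCast_add_one]

theorem choose_mul_mul_sum_ringInverse_eq_zero {p : ℕ} (hp : p.Prime) (s b c : ℕ) :
    (((p ^ s * b + p ^ s * c).choose (p ^ s * b) * (p ^ (s + 1) * c) : ℕ)
        : ZMod ((p ^ (s + 1)) ^ 2)) *
      ∑ x ∈ range (p ^ s * b) ×ˢ range (p - 1),
        Ring.inverse ((p * x.1 + x.2 + 1 : ℕ) : ZMod ((p ^ (s + 1)) ^ 2)) = 0 := by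
  set q := p ^ (s + 1) with hq
  have : NeZero q := ⟨pow_ne_zero _ hp.ne_zero⟩
  set Y := (p ^ s * b + p ^ s * c).choose (p ^ s * b)
  rw [Nat.mul_left_comm, Nat.cast_mul, mul_assoc]
  apply ZMod.natCast_mul_eq_zero_of_castHom_eq_zero
  have hu : ∀ x ∈ range (p ^ s * b) ×ˢ range (p - 1),
      IsUnit ((p * x.1 + x.2 + 1 : ℕ) : ZMod (q ^ 2)) := fun x hx =>
    (ZMod.isUnit_iff_coprime _ _).2 <| (Nat.Coprime.pow_right _ <| coprime_mul_add_add_one hp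
      (by rw [mem_product, mem_range, mem_range] at hx; omega) _).pow_right _
  have hN : p * (p ^ s * b) = q * b := by rw [hq]; ring
  rw [map_mul, map_natCast, map_sum,
    sum_congr rfl fun x hx => by rw [map_ringInverse _ (hu x hx), map_natCast],
    sum_ringInverse_natCast_eq_nsmul hp (dvd_pow_self p s.succ_ne_zero) hN]
  obtain ⟨m, hm⟩ := two_dvd_mul_mul_choose_mul_add_mul (pow_pos hp.pos s) b c
  calc ((Y * c : ℕ) : ZMod q) * b • ∑ z : ZMod q, Ring.inverse z
      = ((b * c * Y : ℕ) : ZMod q) * ∑ z : ZMod q, Ring.inverse z := by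
        rw [nsmul_eq_mul]; push_cast; ring
    _ = m * (∑ z : ZMod q, Ring.inverse z + ∑ z : ZMod q, Ring.inverse z) := by
        rw [hm]; push_cast; ring
    _ = 0 := by rw [sum_ringInverse_add_self, mul_zero]

theorem choose_pow_succ_mul_add_modEq {p : ℕ} (hp : p.Prime) (s b c : ℕ) :
    (p ^ (s + 1) * b + p ^ (s + 1) * c).choose (p ^ (s + 1) * b)
      ≡ (p ^ s * b + p ^ s * c).choose (p ^ s * b) [MOD (p ^ (s + 1)) ^ 2] := by
  have hcorr := choose_mul_mul_sum_ringInverse_eq_zero hp s b c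
  set q := p ^ (s + 1) with hq
  set N := p ^ s * b
  set D := p ^ s * c
  have hqN : q * b = p * N := by rw [hq]; ring
  have hqD : q * c = p * D := by rw [hq]; ring
  rw [hqN, hqD, ← ZMod.natCast_eq_natCast_iff]
  rw [hqD] at hcorr
  have hunit : ∀ ℓ : ℕ, ℓ.Coprime p → IsUnit (ℓ : ZMod (q ^ 2)) := fun ℓ hℓ =>
    (ZMod.isUnit_iff_coprime _ _).2 ((hℓ.pow_right _).pow_right _)
  have hsq : ((p * D : ℕ) : ZMod (q ^ 2)) * ((p * D : ℕ) : ZMod (q ^ 2)) = 0 := by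
    rw [← hqD, ← Nat.cast_mul, show q * c * (q * c) = q ^ 2 * (c * c) by ring, Nat.cast_mul,
      ZMod.natCast_self, zero_mul]
  have hkey := congrArg (Nat.cast : ℕ → ZMod (q ^ 2))
    (choose_mul_add_mul_mul_coprimeAscFactorial hp.pos D N)
  rw [Nat.cast_mul, Nat.cast_mul, natCast_coprimeAscFactorial_eq hp hunit hsq] at hkey
  push_cast at hkey hcorr
  exact (hunit _ (coprimeAscFactorial_coprime hp 0 N)).mul_right_cancel
    (by linear_combination hkey + (coprimeAscFactorial p 0 N : ZMod (q ^ 2)) * hcorr)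

/-- Let `p` be prime, `r ≥ 1`, and `a₁,...,aₙ` nonnegative integers. Then the multinomial
coefficient `(p^r·a)!/∏ (p^r·aᵢ)!` is congruent to `(p^(r-1)·a)!/∏ (p^(r-1)·aᵢ)!`
modulo `p^(2r)`, where `a = Σ aᵢ`. -/
theorem multinomial_congr_mod_p_pow {ι : Type*} (s : Finset ι) (f : ι → ℕ)
    (p r : ℕ) (hp : p.Prime) (hr : 1 ≤ r) :
    Nat.multinomial s (fun i => p ^ r * f i) ≡ Nat.multinomial s (fun i => p ^ (r - 1) * f i)
      [MOD p ^ (2 * r)] := by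
  obtain ⟨t, rfl⟩ : ∃ t, r = t + 1 := ⟨r - 1, by omega⟩
  rw [Nat.add_sub_cancel, pow_mul']
  induction s using Finset.cons_induction with
  | empty => rfl
  | cons a s ha ih =>
    simp only [Nat.multinomial_cons, ← mul_sum]
    exact (choose_pow_succ_mul_add_modEq hp t (f a) (∑ i ∈ s, f i)).mul ih
end
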